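/- arXiv:2103.07530 — 17 statements merged into one kernel-verified Lean document; each statement's English description precedes it below -/
import Mathlib

section
/- Let N : A → A be a Nijenhuis operator. Then for all integers i, j ≥ 1 and all a, b ∈ A one has N^i(a)N^j(b) = N^j(N^i(a)b) + N^i(a N^j(b)) − N^{i+j}(ab), where N^k denotes the k-th iterate of N. -/
/-- If `N` is a Nijenhuis operator on a (not necessarily associative)
`R`-algebra `A` (multiplication given by the bilinear map `mul`), then for all
`i, j ≥ 1` and all `a, b ∈ A`:
`N^i(a) N^j(b) = N^j(N^i(a) b) + N^i(a N^j(b)) − N^{i+j}(a b)`. -/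
theorem nijenhuis_pow {R A : Type*} [CommRing R] [AddCommGroup A] [Module R A]
    (mul : A →ₗ[R] A →ₗ[R] A) (N : Module.End R A)
    (hN : ∀ a b : A, mul (N a) (N b) = N (mul (N a) b + mul a (N b) - N (mul a b))) :
    ∀ (i j : ℕ), 1 ≤ i → 1 ≤ j → ∀ a b : A,
      mul ((N ^ i) a) ((N ^ j) b)
        = (N ^ j) (mul ((N ^ i) a) b) + (N ^ i) (mul a ((N ^ j) b))
          - (N ^ (i + j)) (mul a b) := by
  have hsucc : ∀ (k : ℕ) (x : A), (N ^ (k + 1)) x = N ((N ^ k) x) := by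
    intro k x
    rw [pow_succ']
    rfl
  have h1 : ∀ j : ℕ, 1 ≤ j → ∀ a b : A,
      mul (N a) ((N ^ j) b)
        = (N ^ j) (mul (N a) b) + N (mul a ((N ^ j) b)) - (N ^ (1 + j)) (mul a b) := by
    intro j hj
    induction j, hj using Nat.le_induction with
    | base =>
      intro a b
      simpa [pow_one, hsucc] using hN a b
    | succ j hj ih =>
      intro a b
      rw [hsucc j b, hN a ((N ^ j) b), ih a b,
        show 1 + (j + 1) = (1 + j) + 1 by ring, hsucc (1 + j), hsucc j]
      simp only [map_add, map_sub]
      abel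
  intro i j hi hj
  induction i, hi using Nat.le_induction with
  | base =>
    intro a b
    simpa using h1 j hj a b
  | succ i hi ih =>
    intro a b
    rw [hsucc i a, show i + 1 + j = (i + j) + 1 by ring, hsucc (i + j), hsucc i,
      h1 j hj ((N ^ i) a) b, ih a b, show 1 + j = j + 1 by ring, hsucc j]
    simp only [map_add, map_sub]
    abel
end

section
/- Let M be an R-module equipped with R-bilinear maps A × M → M, (a,m) ↦ a·m, M × A → M, (m,a) ↦ m·a, and M × M → M, (m,m') ↦ m•m', and define on A ⊕ M the product (a,m)∗(a',m') := (aa', a·m' + m·a' + m•m'). Given a linear map 𝔯 : M → A and λ ∈ R, define the lift 𝔯̂ : A ⊕ M → A ⊕ M by 𝔯̂(a,m) := (−λa + 𝔯(m), 0). Then 𝔯 satisfies 𝔯(m)𝔯(m') = 𝔯(𝔯(m)·m' + m·𝔯(m') + λ m•m') for all m,m' ∈ M if and only if 𝔯̂ satisfies 𝔯̂(u)∗𝔯̂(v) = 𝔯̂(𝔯̂(u)∗v + u∗𝔯̂(v) + λ u∗v) for all u, v ∈ A ⊕ M. -/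
/-- Let `A` be a (not necessarily associative) `R`-algebra, `M` an
`R`-module equipped with bilinear left/right actions of `A` and a bilinear product
`bul`, and consider on `A ⊕ M` the product
`(a,m) ∗ (a',m') = (aa', a·m' + m·a' + m•m')`.  Given a linear map `rbo : M → A` and
`lam ∈ R`, define the lift `rhat (a,m) = (−lam•a + rbo m, 0)`.  Then `rbo` is a
relative Rota-Baxter operator of weight `lam` if and only if `rhat` is a
Rota-Baxter operator of weight `lam` on `(A ⊕ M, ∗)`. -/
theorem lift_rota_baxter {R A M : Type*} [CommRing R]
    [AddCommGroup A] [Module R A] [AddCommGroup M] [Module R M]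
    (mul : A →ₗ[R] A →ₗ[R] A)
    (l : A →ₗ[R] M →ₗ[R] M) (r : M →ₗ[R] A →ₗ[R] M) (bul : M →ₗ[R] M →ₗ[R] M)
    (rbo : M →ₗ[R] A) (lam : R) :
    let star : A × M → A × M → A × M :=
      fun p q => (mul p.1 q.1, l p.1 q.2 + r p.2 q.1 + bul p.2 q.2)
    let rhat : A × M → A × M := fun p => (-(lam • p.1) + rbo p.2, 0)
    ((∀ m m' : M,
        mul (rbo m) (rbo m')
          = rbo (l (rbo m) m' + r m (rbo m') + lam • bul m m')) ↔
      (∀ u v : A × M,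
        star (rhat u) (rhat v)
          = rhat (star (rhat u) v + star u (rhat v) + lam • star u v))) := by
  intro star rhat
  constructor
  · intro h u v
    obtain ⟨a, m⟩ := u
    obtain ⟨a', m'⟩ := v
    simp only [star, rhat, Prod.mk.injEq, Prod.fst_add, Prod.snd_add, Prod.smul_mk,
      Prod.mk_add_mk, smul_add, map_add, map_neg, map_smul, map_zero,
      LinearMap.add_apply, LinearMap.neg_apply, LinearMap.smul_apply,
      LinearMap.zero_apply, LinearMap.map_smul, LinearMap.map_neg, smul_zero]
    refine ⟨?_, by abel⟩
    rw [h m m']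
    simp only [map_add, map_smul]
    module
  · intro h m m'
    have := h (0, m) (0, m')
    simp only [star, rhat, Prod.mk.injEq, Prod.fst_add, Prod.snd_add, Prod.smul_mk,
      Prod.mk_add_mk, smul_zero, smul_add, map_add, map_zero, map_smul, neg_zero,
      zero_add, add_zero, LinearMap.add_apply, LinearMap.zero_apply,
      LinearMap.smul_apply] at this
    simp only [map_add, map_smul]
    exact this.1
end

section
/- Let A be an R-module with three R-bilinear products ≺, ≻, ∨, set a⋆b := a≺b + a≻b + a∨b, and define on A ⊕ A the product (a,x) ⊠ (b,y) := (a⋆b, a≻y + x≺b). Then ⊠ is an associative product on A ⊕ A if and only if the four relations (ns1)–(ns4) hold, i.e. (A, ≺, ≻, ∨) is an NS-algebra. -/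
/-- Let `A` be an `R`-module with three bilinear products `≺ = pre`,
`≻ = suc`, `∨ = vee`, let `⋆ = star` be their sum, and define on `A ⊕ A` the product
`(a,x) ⊠ (b,y) := (a⋆b, a≻y + x≺b)`.  Then `⊠` is associative if and only if
`(A, ≺, ≻, ∨)` satisfies the NS-algebra relations (ns1)–(ns4). -/
theorem ns_iff_box_assoc {R A : Type*} [CommRing R] [AddCommGroup A] [Module R A]
    (pre suc vee : A →ₗ[R] A →ₗ[R] A) :
    let star : A → A → A := fun a b => pre a b + suc a b + vee a b
    let box : A × A → A × A → A × A :=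
      fun p q => (star p.1 q.1, suc p.1 q.2 + pre p.2 q.1)
    ((∀ u v w : A × A, box (box u v) w = box u (box v w)) ↔
      ((∀ a b c : A, pre (pre a b) c = pre a (star b c)) ∧
       (∀ a b c : A, pre (suc a b) c = suc a (pre b c)) ∧
       (∀ a b c : A, suc (star a b) c = suc a (suc b c)) ∧
       (∀ a b c : A,
         pre (vee a b) c + vee (star a b) c = suc a (vee b c) + vee a (star b c)))) := by
  intro star box
  have hbox : ∀ a x b y : A, box (a, x) (b, y) =
      (pre a b + suc a b + vee a b, suc a y + pre x b) := fun _ _ _ _ => rfl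
  constructor
  · intro h
    have hsnd' : ∀ a x b y c z : A,
        suc (pre a b + suc a b + vee a b) z + pre (suc a y + pre x b) c
          = suc a (suc b z + pre y c) + pre x (pre b c + suc b c + vee b c) := by
      intro a x b y c z
      have := congrArg Prod.snd (h (a, x) (b, y) (c, z))
      simpa only [hbox, star] using this
    have h2 : ∀ a b c : A, pre (suc a b) c = suc a (pre b c) := by
      intro a b c
      have := hsnd' a 0 0 b c 0
      simpa using this
    have h1 : ∀ a b c : A, pre (pre a b) c = pre a (star b c) := by
      intro a b c
      have := hsnd' 0 a b 0 c 0
      simpa [star, map_add] using this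
    have h3 : ∀ a b c : A, suc (star a b) c = suc a (suc b c) := by
      intro a b c
      have := hsnd' a 0 b 0 c c
      simpa [star] using this
    refine ⟨h1, h2, h3, fun a b c => ?_⟩
    have hfst := congrArg Prod.fst (h (a, 0) (b, 0) (c, 0))
    simp only [hbox] at hfst
    have H1 := h1 a b c
    have H2 := h2 a b c
    have H3 := h3 a b c
    simp only [star, map_add, LinearMap.add_apply] at hfst H1 H2 H3 ⊢
    linear_combination (norm := abel) hfst - H1 - H2 - H3
  · rintro ⟨h1, h2, h3, h4⟩ ⟨a, x⟩ ⟨b, y⟩ ⟨c, z⟩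
    simp only [hbox]
    have H1 := h1 a b c
    have H2 := h2 a b c
    have H3 := h3 a b c
    have H4 := h4 a b c
    have H1' := h1 x b c
    have H2' := h2 a y c
    have H3' := h3 a b z
    refine Prod.ext ?_ ?_ <;>
      simp only [star, map_add, LinearMap.add_apply] at H1 H2 H3 H4 H1' H2' H3' ⊢
    · linear_combination (norm := abel) H1 + H2 + H3 + H4
    · linear_combination (norm := abel) H1' + H2' + H3'
end

section
/- Let (A, ≺, ≻, ·) be a tridendriform algebra over R. Then (A, ≺, ≻, ∨) with a∨b := a·b is an NS-algebra, i.e. the products ≺, ≻ and · satisfy relations (ns1)–(ns4). -/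
/-- Every tridendriform algebra `(A, ≺, ≻, ·)` is an NS-algebra
`(A, ≺, ≻, ∨)` with `a ∨ b := a · b`, i.e. relations (ns1)–(ns4) hold. -/
theorem tridendriform_is_ns {R A : Type*} [CommRing R] [AddCommGroup A] [Module R A]
    (pre suc dot : A →ₗ[R] A →ₗ[R] A)
    (star : A → A → A) (hstar : ∀ a b : A, star a b = pre a b + suc a b + dot a b)
    (h1 : ∀ a b c : A, pre (pre a b) c = pre a (star b c))
    (h2 : ∀ a b c : A, pre (suc a b) c = suc a (pre b c))
    (h3 : ∀ a b c : A, suc (star a b) c = suc a (suc b c))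
    (h4 : ∀ a b c : A, dot (suc a b) c = suc a (dot b c))
    (h5 : ∀ a b c : A, dot (pre a b) c = dot a (suc b c))
    (h6 : ∀ a b c : A, pre (dot a b) c = dot a (pre b c))
    (h7 : ∀ a b c : A, dot (dot a b) c = dot a (dot b c)) :
    (∀ a b c : A, pre (pre a b) c = pre a (star b c)) ∧
    (∀ a b c : A, pre (suc a b) c = suc a (pre b c)) ∧
    (∀ a b c : A, suc (star a b) c = suc a (suc b c)) ∧
    (∀ a b c : A,
      pre (dot a b) c + dot (star a b) c = suc a (dot b c) + dot a (star b c)) := by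
  refine ⟨h1, h2, h3, fun a b c => ?_⟩
  simp only [hstar, map_add, LinearMap.add_apply, h4, h5, h6, h7]
  abel
end

section
/- Let M be an A-bimodule, let β : M → A be a linear map and α : M × M → M an R-bilinear map. Define products on M by m≻m' := β(m)·m', m≺m' := m·β(m'), m∨m' := α(m,m'), and m⋆m' := m≻m' + m≺m' + m∨m'. If β(m⋆m') = β(m)β(m') for all m,m' ∈ M and the product ⋆ on M is associative, then (M, ≺, ≻, ∨) is an NS-algebra, i.e. relations (ns1)–(ns4) hold in M. -/
/-- Let `A` be a (possibly non-unital) associative `R`-algebra, `M` an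
`A`-bimodule, `β : M → A` linear and `α : M × M → M` bilinear.  Define on `M` the
products `m ≻ m' := β(m)·m'`, `m ≺ m' := m·β(m')`, `m ∨ m' := α(m,m')` and let `⋆` be
their sum.  If `β(m ⋆ m') = β(m) β(m')` for all `m, m'` and `⋆` is associative, then
`(M, ≺, ≻, ∨)` is an NS-algebra, i.e. (ns1)–(ns4) hold. -/
theorem general_ns {R A M : Type*} [CommRing R]
    [NonUnitalRing A] [Module R A] [SMulCommClass R A A] [IsScalarTower R A A]
    [AddCommGroup M] [Module R M]
    (l : A →ₗ[R] M →ₗ[R] M) (r : M →ₗ[R] A →ₗ[R] M)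
    (hl : ∀ (a b : A) (m : M), l (a * b) m = l a (l b m))
    (hr : ∀ (m : M) (a b : A), r (r m a) b = r m (a * b))
    (hlr : ∀ (a : A) (m : M) (b : A), r (l a m) b = l a (r m b))
    (β : M →ₗ[R] A) (α : M →ₗ[R] M →ₗ[R] M)
    (star : M → M → M)
    (hstar : ∀ m m' : M, star m m' = r m (β m') + l (β m) m' + α m m')
    (hβ : ∀ m m' : M, β (star m m') = β m * β m')
    (hassoc : ∀ m m' m'' : M, star (star m m') m'' = star m (star m' m'')) :
    (∀ m m' m'' : M, r (r m (β m')) (β m'') = r m (β (star m' m''))) ∧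
    (∀ m m' m'' : M, r (l (β m) m') (β m'') = l (β m) (r m' (β m''))) ∧
    (∀ m m' m'' : M, l (β (star m m')) m'' = l (β m) (l (β m') m'')) ∧
    (∀ m m' m'' : M,
      r (α m m') (β m'') + α (star m m') m''
        = l (β m) (α m' m'') + α m (star m' m'')) := by
  refine ⟨fun m m' m'' => by rw [hr, hβ], fun m m' m'' => hlr _ _ _,
    fun m m' m'' => by rw [hβ, hl], fun m m' m'' => ?_⟩
  have h := hassoc m m' m''
  rw [hstar (star m m') m'', hstar m (star m' m''), hβ m m', hβ m' m'', hstar m m', hstar m' m''] at h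
  simp only [map_add, LinearMap.add_apply, hr, hl, hlr] at h
  have h4 : α (star m m') m'' = α (r m (β m') + l (β m) m' + α m m') m'' := by
    rw [hstar]
  have h5 : α m (star m' m'') = α m (r m' (β m'') + l (β m') m'' + α m' m'') := by
    rw [hstar]
  rw [h4, h5]
  simp only [map_add, LinearMap.add_apply] at h ⊢
  linear_combination (norm := abel) h
end

section
/- Let N : A → A be a Nijenhuis operator on a (possibly non-unital) associative R-algebra A. Then the new product a⋆b := N(a)b + aN(b) − N(ab) is again associative, i.e. (a⋆b)⋆c = a⋆(b⋆c) for all a,b,c ∈ A. -/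
/-- If `N` is a Nijenhuis operator on a (possibly non-unital)
associative `R`-algebra `A`, then the deformed product
`a ⋆ b := N(a)b + aN(b) − N(ab)` is again associative. -/
theorem nijenhuis_deformed_assoc {R A : Type*} [CommRing R]
    [NonUnitalRing A] [Module R A] [SMulCommClass R A A] [IsScalarTower R A A]
    (N : A →ₗ[R] A)
    (hN : ∀ a b : A, N a * N b = N (N a * b + a * N b - N (a * b)))
    (star : A → A → A)
    (hstar : ∀ a b : A, star a b = N a * b + a * N b - N (a * b)) :
    ∀ a b c : A, star (star a b) c = star a (star b c) := by
  intro a b c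
  simp only [hstar]
  rw [← hN a b, ← hN b c]
  simp only [mul_add, add_mul, mul_sub, sub_mul, map_add, map_sub, mul_assoc]
  rw [hN (a*b) c, hN a (b*c)]
  simp only [map_add, map_sub, mul_assoc]
  abel
end

section
/- Let N : L → L be a Nijenhuis operator on a Lie algebra L over R. Then the new bracket [a,b]_N := [N(a),b] + [a,N(b)] − N([a,b]) is again a Lie bracket on L: it is R-bilinear, alternating ([a,a]_N = 0 for all a), and satisfies the Jacobi identity. -/
private lemma jacL {L : Type*} [LieRing L] (x y z : L) :
    ⁅⁅x, y⁆, z⁆ + ⁅⁅y, z⁆, x⁆ + ⁅⁅z, x⁆, y⁆ = 0 := by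
  have h := lie_jacobi z x y
  rw [← lie_skew z ⁅x, y⁆, ← lie_skew x ⁅y, z⁆, ← lie_skew y ⁅z, x⁆] at h
  have h2 : -(⁅⁅x, y⁆, z⁆ + ⁅⁅y, z⁆, x⁆ + ⁅⁅z, x⁆, y⁆) = 0 := by
    rw [← h]; abel
  have := neg_eq_zero.mp h2
  exact this

/-- If `N` is a Nijenhuis operator on a Lie algebra `L` over `R`, then
the deformed bracket `⁅a,b⁆_N := ⁅N a, b⁆ + ⁅a, N b⁆ − N ⁅a, b⁆` is again a Lie
bracket: it is `R`-bilinear, alternating and satisfies the Jacobi identity. -/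
theorem nijenhuis_deformed_lie {R L : Type*} [CommRing R]
    [LieRing L] [LieAlgebra R L]
    (N : L →ₗ[R] L)
    (hN : ∀ a b : L, ⁅N a, N b⁆ = N (⁅N a, b⁆ + ⁅a, N b⁆ - N ⁅a, b⁆))
    (bN : L → L → L)
    (hbN : ∀ a b : L, bN a b = ⁅N a, b⁆ + ⁅a, N b⁆ - N ⁅a, b⁆) :
    (∀ a b c : L, bN (a + b) c = bN a c + bN b c) ∧
    (∀ a b c : L, bN a (b + c) = bN a b + bN a c) ∧
    (∀ (t : R) (a b : L), bN (t • a) b = t • bN a b) ∧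
    (∀ (t : R) (a b : L), bN a (t • b) = t • bN a b) ∧
    (∀ a : L, bN a a = 0) ∧
    (∀ a b c : L, bN (bN a b) c + bN (bN b c) a + bN (bN c a) b = 0) := by
  refine ⟨?_, ?_, ?_, ?_, ?_, ?_⟩
  · intro a b c
    simp only [hbN, map_add, add_lie, lie_add]
    abel
  · intro a b c
    simp only [hbN, map_add, add_lie, lie_add]
    abel
  · intro t a b
    simp only [hbN, map_smul, smul_lie, lie_smul, smul_sub, smul_add]
  · intro t a b
    simp only [hbN, map_smul, smul_lie, lie_smul, smul_sub, smul_add]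
  · intro a
    rw [hbN, lie_self, map_zero, sub_zero, ← lie_skew a (N a)]
    abel
  · intro a b c
    have hNb : ∀ x y : L, N (bN x y) = ⁅N x, N y⁆ := fun x y => by rw [hbN, ← hN]
    rw [hbN (bN a b) c, hbN (bN b c) a, hbN (bN c a) b, hNb, hNb, hNb,
        hbN a b, hbN b c, hbN c a]
    simp only [add_lie, sub_lie, lie_add, lie_sub, map_add, map_sub]
    rw [hN ⁅a, b⁆ c, hN ⁅b, c⁆ a, hN ⁅c, a⁆ b]
    simp only [map_add, map_sub]
    have final :
        (⁅⁅N a, N b⁆, c⁆ + ⁅⁅N b, c⁆, N a⁆ + ⁅⁅c, N a⁆, N b⁆) +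
        (⁅⁅N b, N c⁆, a⁆ + ⁅⁅N c, a⁆, N b⁆ + ⁅⁅a, N b⁆, N c⁆) +
        (⁅⁅N c, N a⁆, b⁆ + ⁅⁅N a, b⁆, N c⁆ + ⁅⁅b, N c⁆, N a⁆) -
        N ((⁅⁅N a, b⁆, c⁆ + ⁅⁅b, c⁆, N a⁆ + ⁅⁅c, N a⁆, b⁆) +
           (⁅⁅a, N b⁆, c⁆ + ⁅⁅N b, c⁆, a⁆ + ⁅⁅c, a⁆, N b⁆) +
           (⁅⁅a, b⁆, N c⁆ + ⁅⁅b, N c⁆, a⁆ + ⁅⁅N c, a⁆, b⁆)) +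
        N (N (⁅⁅a, b⁆, c⁆ + ⁅⁅b, c⁆, a⁆ + ⁅⁅c, a⁆, b⁆)) = 0 := by
      rw [jacL (N a) (N b) c, jacL (N b) (N c) a, jacL (N c) (N a) b,
          jacL (N a) b c, jacL a (N b) c, jacL a b (N c), jacL a b c]
      simp
    rw [← final]
    simp only [map_add, map_sub]
    abel
end

section
/- Let N : A → A be a Nijenhuis operator on a (possibly non-unital) associative R-algebra A. Define products on A by a≻b := N(a)b, a≺b := aN(b), a∨b := −N(ab). Then (A, ≺, ≻, ∨) is an NS-algebra, i.e. relations (ns1)–(ns4) hold. -/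
/-- If `N` is a Nijenhuis operator on a (possibly non-unital)
associative `R`-algebra `A`, then the products `a ≻ b := N(a)b`, `a ≺ b := aN(b)`,
`a ∨ b := −N(ab)` make `A` into an NS-algebra, i.e. (ns1)–(ns4) hold
(with `a ⋆ b = a≺b + a≻b + a∨b`). -/
theorem nijenhuis_ns {R A : Type*} [CommRing R]
    [NonUnitalRing A] [Module R A] [SMulCommClass R A A] [IsScalarTower R A A]
    (N : A →ₗ[R] A)
    (hN : ∀ a b : A, N a * N b = N (N a * b + a * N b - N (a * b)))
    (pre suc vee star : A → A → A)
    (hpre : ∀ a b : A, pre a b = a * N b)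
    (hsuc : ∀ a b : A, suc a b = N a * b)
    (hvee : ∀ a b : A, vee a b = -N (a * b))
    (hstar : ∀ a b : A, star a b = pre a b + suc a b + vee a b) :
    (∀ a b c : A, pre (pre a b) c = pre a (star b c)) ∧
    (∀ a b c : A, pre (suc a b) c = suc a (pre b c)) ∧
    (∀ a b c : A, suc (star a b) c = suc a (suc b c)) ∧
    (∀ a b c : A,
      pre (vee a b) c + vee (star a b) c = suc a (vee b c) + vee a (star b c)) := by
  have hstar' : ∀ a b : A, star a b = a * N b + N a * b - N (a * b) := by
    intro a b
    rw [hstar, hpre, hsuc, hvee]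
    abel
  have hNstar : ∀ a b : A, N (star a b) = N a * N b := by
    intro a b
    rw [hstar', hN]
    abel_nf
  refine ⟨?_, ?_, ?_, ?_⟩
  · intro a b c
    rw [hpre, hpre, hpre, hNstar, mul_assoc]
  · intro a b c
    rw [hpre, hsuc, hsuc, hpre, mul_assoc]
  · intro a b c
    rw [hsuc, hsuc, hsuc, hNstar, mul_assoc]
  · intro a b c
    rw [hpre, hvee, hvee, hsuc, hvee, hvee, hstar', hstar']
    rw [neg_mul, mul_neg, hN (a*b) c, hN a (b*c)]
    simp only [map_sub, map_add, map_neg, neg_mul, mul_neg, mul_sub, mul_add,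
      sub_mul, add_mul, mul_assoc]
    abel
end

section
/- Let N : L → L be a Nijenhuis operator on a Lie algebra L over R. Define a×b := [N(a),b], a∨b := −N([a,b]) and a⋆b := [N(a),b] + [a,N(b)] − N([a,b]). Then (L, ×, ∨) is a Lie NS-algebra: ∨ is antisymmetric (a∨b = −b∨a), one has (a⋆b)×c = a×(b×c) − b×(a×c) for all a,b,c ∈ L, and the relation a∨(b⋆c) + b∨(c⋆a) + c∨(a⋆b) + a×(b∨c) + b×(c∨a) + c×(a∨b) = 0 holds for all a,b,c ∈ L. -/
/-- If `N` is a Nijenhuis operator on a Lie algebra `L` over `R`, then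
with `a × b := ⁅N a, b⁆`, `a ∨ b := −N ⁅a, b⁆` and
`a ⋆ b := ⁅N a, b⁆ + ⁅a, N b⁆ − N ⁅a, b⁆`, the triple `(L, ×, ∨)` is a Lie
NS-algebra: `∨` is antisymmetric, `(a⋆b) × c = a × (b × c) − b × (a × c)` and the
cyclic relation
`a∨(b⋆c) + b∨(c⋆a) + c∨(a⋆b) + a×(b∨c) + b×(c∨a) + c×(a∨b) = 0` holds. -/
theorem nijenhuis_lie_ns {R L : Type*} [CommRing R]
    [LieRing L] [LieAlgebra R L]
    (N : L →ₗ[R] L)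
    (hN : ∀ a b : L, ⁅N a, N b⁆ = N (⁅N a, b⁆ + ⁅a, N b⁆ - N ⁅a, b⁆))
    (times vee star : L → L → L)
    (htimes : ∀ a b : L, times a b = ⁅N a, b⁆)
    (hvee : ∀ a b : L, vee a b = -N ⁅a, b⁆)
    (hstar : ∀ a b : L, star a b = ⁅N a, b⁆ + ⁅a, N b⁆ - N ⁅a, b⁆) :
    (∀ a b : L, vee a b = -vee b a) ∧
    (∀ a b c : L, times (star a b) c = times a (times b c) - times b (times a c)) ∧
    (∀ a b c : L,
      vee a (star b c) + vee b (star c a) + vee c (star a b)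
        + times a (vee b c) + times b (vee c a) + times c (vee a b) = 0) := by
  refine ⟨fun a b => by rw [hvee, hvee, ← lie_skew a b, map_neg, neg_neg], fun a b c => ?_, fun a b c => ?_⟩
  · rw [htimes, htimes, htimes, htimes, htimes, hstar, ← hN, lie_lie]
  · have hsum1 : ⁅a, ⁅N b, c⁆⁆ + ⁅a, ⁅b, N c⁆⁆ + ⁅b, ⁅N c, a⁆⁆ + ⁅b, ⁅c, N a⁆⁆
        + ⁅c, ⁅N a, b⁆⁆ + ⁅c, ⁅a, N b⁆⁆ + ⁅N a, ⁅b, c⁆⁆ + ⁅N b, ⁅c, a⁆⁆ + ⁅N c, ⁅a, b⁆⁆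
        = 0 := by
      have j1 := lie_jacobi (N a) b c
      have j2 := lie_jacobi (N b) c a
      have j3 := lie_jacobi (N c) a b
      have : ⁅a, ⁅N b, c⁆⁆ + ⁅a, ⁅b, N c⁆⁆ + ⁅b, ⁅N c, a⁆⁆ + ⁅b, ⁅c, N a⁆⁆
        + ⁅c, ⁅N a, b⁆⁆ + ⁅c, ⁅a, N b⁆⁆ + ⁅N a, ⁅b, c⁆⁆ + ⁅N b, ⁅c, a⁆⁆ + ⁅N c, ⁅a, b⁆⁆
        = (⁅N a, ⁅b, c⁆⁆ + ⁅b, ⁅c, N a⁆⁆ + ⁅c, ⁅N a, b⁆⁆)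
          + (⁅N b, ⁅c, a⁆⁆ + ⁅c, ⁅a, N b⁆⁆ + ⁅a, ⁅N b, c⁆⁆)
          + (⁅N c, ⁅a, b⁆⁆ + ⁅a, ⁅b, N c⁆⁆ + ⁅b, ⁅N c, a⁆⁆) := by abel
      rw [this, j1, j2, j3]; simp
    have hsum2 := lie_jacobi a b c
    have t1 : vee a (star b c) = -N (⁅a, ⁅N b, c⁆⁆ + ⁅a, ⁅b, N c⁆⁆ - ⁅a, N ⁅b, c⁆⁆) := by
      rw [hvee, hstar, lie_sub, lie_add]
    have t2 : vee b (star c a) = -N (⁅b, ⁅N c, a⁆⁆ + ⁅b, ⁅c, N a⁆⁆ - ⁅b, N ⁅c, a⁆⁆) := by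
      rw [hvee, hstar, lie_sub, lie_add]
    have t3 : vee c (star a b) = -N (⁅c, ⁅N a, b⁆⁆ + ⁅c, ⁅a, N b⁆⁆ - ⁅c, N ⁅a, b⁆⁆) := by
      rw [hvee, hstar, lie_sub, lie_add]
    have t4 : times a (vee b c) = -N (⁅N a, ⁅b, c⁆⁆ + ⁅a, N ⁅b, c⁆⁆ - N ⁅a, ⁅b, c⁆⁆) := by
      rw [htimes, hvee, lie_neg, hN]
    have t5 : times b (vee c a) = -N (⁅N b, ⁅c, a⁆⁆ + ⁅b, N ⁅c, a⁆⁆ - N ⁅b, ⁅c, a⁆⁆) := by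
      rw [htimes, hvee, lie_neg, hN]
    have t6 : times c (vee a b) = -N (⁅N c, ⁅a, b⁆⁆ + ⁅c, N ⁅a, b⁆⁆ - N ⁅c, ⁅a, b⁆⁆) := by
      rw [htimes, hvee, lie_neg, hN]
    rw [t1, t2, t3, t4, t5, t6, ← neg_add, ← neg_add, ← neg_add, ← neg_add, ← neg_add,
      ← map_add, ← map_add, ← map_add, ← map_add, ← map_add]
    have harg : (⁅a, ⁅N b, c⁆⁆ + ⁅a, ⁅b, N c⁆⁆ - ⁅a, N ⁅b, c⁆⁆)
        + (⁅b, ⁅N c, a⁆⁆ + ⁅b, ⁅c, N a⁆⁆ - ⁅b, N ⁅c, a⁆⁆)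
        + (⁅c, ⁅N a, b⁆⁆ + ⁅c, ⁅a, N b⁆⁆ - ⁅c, N ⁅a, b⁆⁆)
        + (⁅N a, ⁅b, c⁆⁆ + ⁅a, N ⁅b, c⁆⁆ - N ⁅a, ⁅b, c⁆⁆)
        + (⁅N b, ⁅c, a⁆⁆ + ⁅b, N ⁅c, a⁆⁆ - N ⁅b, ⁅c, a⁆⁆)
        + (⁅N c, ⁅a, b⁆⁆ + ⁅c, N ⁅a, b⁆⁆ - N ⁅c, ⁅a, b⁆⁆)
        = (⁅a, ⁅N b, c⁆⁆ + ⁅a, ⁅b, N c⁆⁆ + ⁅b, ⁅N c, a⁆⁆ + ⁅b, ⁅c, N a⁆⁆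
          + ⁅c, ⁅N a, b⁆⁆ + ⁅c, ⁅a, N b⁆⁆ + ⁅N a, ⁅b, c⁆⁆ + ⁅N b, ⁅c, a⁆⁆ + ⁅N c, ⁅a, b⁆⁆)
          - (N ⁅a, ⁅b, c⁆⁆ + N ⁅b, ⁅c, a⁆⁆ + N ⁅c, ⁅a, b⁆⁆) := by abel
    have hN2 : N ⁅a, ⁅b, c⁆⁆ + N ⁅b, ⁅c, a⁆⁆ + N ⁅c, ⁅a, b⁆⁆ = 0 := by
      rw [← map_add, ← map_add, hsum2, map_zero]
    rw [harg, hsum1, hN2]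
    simp
end

section
/- Let (M, •) be an A-bimodule algebra, let λ ∈ R, and let 𝔯 : M → A be a relative Rota-Baxter operator of weight λ. Define products on M by m≺m' := m·𝔯(m'), m≻m' := 𝔯(m)·m', m·m' := λ m•m'. Then (M, ≺, ≻, ·) is a tridendriform algebra, i.e. the seven tridendriform relations hold in M. -/
/-- Let `A` be a (possibly non-unital) associative `R`-algebra and
`(M, •)` an `A`-bimodule algebra (i.e. the product
`(a,m) ∗ (a',m') = (aa', a·m' + m·a' + m•m')` on `A ⊕ M` is associative).  If
`rb : M → A` is a relative Rota-Baxter operator of weight `lam`, then the products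
`m ≺ m' := m·rb(m')`, `m ≻ m' := rb(m)·m'`, `m · m' := lam • (m • m')` make `M`
into a tridendriform algebra (the seven tridendriform relations hold). -/
theorem rel_rb_tridendriform {R A M : Type*} [CommRing R]
    [NonUnitalRing A] [Module R A] [SMulCommClass R A A] [IsScalarTower R A A]
    [AddCommGroup M] [Module R M]
    (l : A →ₗ[R] M →ₗ[R] M) (r : M →ₗ[R] A →ₗ[R] M) (bul : M →ₗ[R] M →ₗ[R] M)
    (ext : A × M → A × M → A × M)
    (hext : ∀ p q : A × M, ext p q = (p.1 * q.1, l p.1 q.2 + r p.2 q.1 + bul p.2 q.2))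
    (hbimodalg : ∀ u v w : A × M, ext (ext u v) w = ext u (ext v w))
    (rb : M →ₗ[R] A) (lam : R)
    (hrb : ∀ m m' : M,
      rb m * rb m' = rb (l (rb m) m' + r m (rb m') + lam • bul m m'))
    (pre suc dot star : M → M → M)
    (hpre : ∀ m m' : M, pre m m' = r m (rb m'))
    (hsuc : ∀ m m' : M, suc m m' = l (rb m) m')
    (hdot : ∀ m m' : M, dot m m' = lam • bul m m')
    (hstar : ∀ m m' : M, star m m' = pre m m' + suc m m' + dot m m') :
    (∀ a b c : M, pre (pre a b) c = pre a (star b c)) ∧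
    (∀ a b c : M, pre (suc a b) c = suc a (pre b c)) ∧
    (∀ a b c : M, suc (star a b) c = suc a (suc b c)) ∧
    (∀ a b c : M, dot (suc a b) c = suc a (dot b c)) ∧
    (∀ a b c : M, dot (pre a b) c = dot a (suc b c)) ∧
    (∀ a b c : M, pre (dot a b) c = dot a (pre b c)) ∧
    (∀ a b c : M, dot (dot a b) c = dot a (dot b c)) := by
 -- Derive component identities from associativity of ext.
  have key : ∀ u v w : A × M,
      l (u.1 * v.1) w.2 + r (l u.1 v.2 + r u.2 v.1 + bul u.2 v.2) w.1
        + bul (l u.1 v.2 + r u.2 v.1 + bul u.2 v.2) w.2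
      = l u.1 (l v.1 w.2 + r v.2 w.1 + bul v.2 w.2) + r u.2 (v.1 * w.1)
        + bul u.2 (l v.1 w.2 + r v.2 w.1 + bul v.2 w.2) := by
    intro u v w
    have h := hbimodalg u v w
    rw [hext u v, hext v w, hext _ w, hext u _] at h
    exact congrArg Prod.snd h
  have hll : ∀ (a a' : A) (m : M), l (a * a') m = l a (l a' m) := by
    intro a a' m
    have h := key (a, 0) (a', 0) (0, m)
    simpa using h
  have hrr : ∀ (m : M) (a a' : A), r (r m a) a' = r m (a * a') := by
    intro m a a'
    have h := key (0, m) (a, 0) (a', 0)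
    simpa using h
  have hrl : ∀ (a : A) (m : M) (a' : A), r (l a m) a' = l a (r m a') := by
    intro a m a'
    have h := key (a, 0) (0, m) (a', 0)
    simpa using h
  have hbl : ∀ (a : A) (m m' : M), bul (l a m) m' = l a (bul m m') := by
    intro a m m'
    have h := key (a, 0) (0, m) (0, m')
    simpa using h
  have hbr : ∀ (m : M) (a : A) (m' : M), bul (r m a) m' = bul m (l a m') := by
    intro m a m'
    have h := key (0, m) (a, 0) (0, m')
    simpa using h
  have hrb' : ∀ (m m' : M) (a : A), r (bul m m') a = bul m (r m' a) := by
    intro m m' a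
    have h := key (0, m) (0, m') (a, 0)
    simpa using h
  have hbb : ∀ m m' m'' : M, bul (bul m m') m'' = bul m (bul m' m'') := by
    intro m m' m''
    have h := key (0, m) (0, m') (0, m'')
    simpa using h
  have hstar' : ∀ m m' : M, star m m' = l (rb m) m' + r m (rb m') + lam • bul m m' := by
    intro m m'
    rw [hstar, hpre, hsuc, hdot]; abel
  refine ⟨?_, ?_, ?_, ?_, ?_, ?_, ?_⟩
  · intro a b c
    rw [hpre, hpre, hpre, hstar', ← hrb, hrr]
  · intro a b c
    rw [hpre, hsuc, hsuc, hpre, hrl]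
  · intro a b c
    rw [hsuc, hsuc, hsuc, hstar', ← hrb, hll]
  · intro a b c
    rw [hdot, hsuc, hsuc, hdot, hbl, map_smul]
  · intro a b c
    rw [hdot, hpre, hdot, hsuc, hbr]
  · intro a b c
    rw [hpre, hdot, hdot, hpre, map_smul, LinearMap.smul_apply, hrb']
  · intro a b c
    rw [hdot, hdot, hdot, hdot, map_smul, LinearMap.smul_apply, hbb, smul_comm,
      (bul a).map_smul]
end

section
/- Let (M, •) be an A-bimodule algebra, let λ ∈ R, and let 𝔯 : M → A be a relative Rota-Baxter operator of weight λ. Define products on M by m≺m' := m·𝔯(m'), m≻m' := 𝔯(m)·m', m∨m' := λ m•m'. Then (M, ≺, ≻, ∨) is an NS-algebra, i.e. relations (ns1)–(ns4) hold in M. -/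
/-- Let `A` be a (possibly non-unital) associative `R`-algebra and
`(M, •)` an `A`-bimodule algebra.  If `rb : M → A` is a relative Rota-Baxter
operator of weight `lam`, then the products `m ≺ m' := m·rb(m')`,
`m ≻ m' := rb(m)·m'`, `m ∨ m' := lam • (m • m')` make `M` into an NS-algebra,
i.e. relations (ns1)–(ns4) hold in `M`. -/
theorem rel_rb_ns {R A M : Type*} [CommRing R]
    [NonUnitalRing A] [Module R A] [SMulCommClass R A A] [IsScalarTower R A A]
    [AddCommGroup M] [Module R M]
    (l : A →ₗ[R] M →ₗ[R] M) (r : M →ₗ[R] A →ₗ[R] M) (bul : M →ₗ[R] M →ₗ[R] M)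
    (ext : A × M → A × M → A × M)
    (hext : ∀ p q : A × M, ext p q = (p.1 * q.1, l p.1 q.2 + r p.2 q.1 + bul p.2 q.2))
    (hbimodalg : ∀ u v w : A × M, ext (ext u v) w = ext u (ext v w))
    (rb : M →ₗ[R] A) (lam : R)
    (hrb : ∀ m m' : M,
      rb m * rb m' = rb (l (rb m) m' + r m (rb m') + lam • bul m m'))
    (pre suc vee star : M → M → M)
    (hpre : ∀ m m' : M, pre m m' = r m (rb m'))
    (hsuc : ∀ m m' : M, suc m m' = l (rb m) m')
    (hvee : ∀ m m' : M, vee m m' = lam • bul m m')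
    (hstar : ∀ m m' : M, star m m' = pre m m' + suc m m' + vee m m') :
    (∀ a b c : M, pre (pre a b) c = pre a (star b c)) ∧
    (∀ a b c : M, pre (suc a b) c = suc a (pre b c)) ∧
    (∀ a b c : M, suc (star a b) c = suc a (suc b c)) ∧
    (∀ a b c : M,
      pre (vee a b) c + vee (star a b) c = suc a (vee b c) + vee a (star b c)) := by
  have H : ∀ (a a' a'' : A) (m m' m'' : M),
      l (a * a') m'' + r (l a m' + r m a' + bul m m') a''
        + bul (l a m' + r m a' + bul m m') m''
      = l a (l a' m'' + r m' a'' + bul m' m'') + r m (a' * a'')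
        + bul m (l a' m'' + r m' a'' + bul m' m'') := by
    intro a a' a'' m m' m''
    have h := hbimodalg (a, m) (a', m') (a'', m'')
    simp only [hext] at h
    exact congrArg Prod.snd h
  -- specialized identities
  have hrr : ∀ (m : M) (x y : A), r (r m x) y = r m (x * y) := by
    intro m x y
    have := H 0 x y m 0 0
    simpa using this
  have hrl : ∀ (x : A) (m : M) (y : A), r (l x m) y = l x (r m y) := by
    intro x m y
    have := H x 0 y 0 m 0
    simpa using this
  have hll : ∀ (x y : A) (m : M), l (x * y) m = l x (l y m) := by
    intro x y m
    have := H x y 0 0 0 m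
    simpa using this
  have hbl : ∀ (x : A) (m m' : M), bul (l x m) m' = l x (bul m m') := by
    intro x m m'
    have := H x 0 0 0 m m'
    simpa using this
  have hbr : ∀ (m : M) (x : A) (m' : M), bul (r m x) m' = bul m (l x m') := by
    intro m x m'
    have := H 0 x 0 m 0 m'
    simpa using this
  have hrb2 : ∀ (m m' : M) (x : A), r (bul m m') x = bul m (r m' x) := by
    intro m m' x
    have := H 0 0 x m m' 0
    simpa using this
  have hbb : ∀ m m' m'' : M, bul (bul m m') m'' = bul m (bul m' m'') := by
    intro m m' m''
    have := H 0 0 0 m m' m''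
    simpa using this
  have hrbstar : ∀ b c : M, rb (star b c) = rb b * rb c := by
    intro b c
    rw [hstar, hpre, hsuc, hvee, hrb]
    exact congrArg rb (by abel)
  refine ⟨?_, ?_, ?_, ?_⟩
  · intro a b c
    rw [hpre, hpre, hpre, hrbstar, hrr]
  · intro a b c
    rw [hpre, hsuc, hsuc, hpre, hrl]
  · intro a b c
    rw [hsuc, hsuc, hsuc, hrbstar, hll]
  · intro a b c
    rw [hpre, hvee, hvee, hsuc, hvee, hvee, hstar, hstar, hpre, hsuc, hvee,
      hpre, hsuc, hvee]
    simp only [map_add, map_smul, LinearMap.add_apply, LinearMap.smul_apply,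
      hbl, hbr, hrb2, hbb, smul_add]
    abel
end

section
/- Let M be an A-bimodule and let 𝔯 : M → A be a relative Rota-Baxter operator of weight zero, i.e. 𝔯(m)𝔯(m') = 𝔯(𝔯(m)·m' + m·𝔯(m')) for all m,m' ∈ M. Define m⋆m' := 𝔯(m)·m' + m·𝔯(m') on M, and define actions of M on A by m▷a := 𝔯(m)a − 𝔯(m·a) and a◁m := a𝔯(m) − 𝔯(a·m). Then the product on M ⊕ A given by (m,a)⋄(m',a') := (m⋆m', m▷a' + a◁m') is associative; in particular ⋆ is an associative product on M and (A, ▷, ◁) is an (M,⋆)-bimodule. -/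
/-- Let `A` be a (possibly non-unital) associative `R`-algebra, `M` an
`A`-bimodule and `rb : M → A` a relative Rota-Baxter operator of weight zero.
Define `m ⋆ m' := rb(m)·m' + m·rb(m')` on `M`, and actions of `M` on `A` by
`m ▷ a := rb(m)a − rb(m·a)` and `a ◁ m := a rb(m) − rb(a·m)`.  Then the product on
`M ⊕ A` given by `(m,a) ⋄ (m',a') := (m ⋆ m', m ▷ a' + a ◁ m')` is associative; in
particular `⋆` is associative on `M` and `(A, ▷, ◁)` is an `(M,⋆)`-bimodule. -/
theorem rel_rb_weight_zero_bimodule {R A M : Type*} [CommRing R]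
    [NonUnitalRing A] [Module R A] [SMulCommClass R A A] [IsScalarTower R A A]
    [AddCommGroup M] [Module R M]
    (l : A →ₗ[R] M →ₗ[R] M) (r : M →ₗ[R] A →ₗ[R] M)
    (hl : ∀ (a b : A) (m : M), l (a * b) m = l a (l b m))
    (hr : ∀ (m : M) (a b : A), r (r m a) b = r m (a * b))
    (hlr : ∀ (a : A) (m : M) (b : A), r (l a m) b = l a (r m b))
    (rb : M →ₗ[R] A)
    (hrb : ∀ m m' : M, rb m * rb m' = rb (l (rb m) m' + r m (rb m')))
    (star : M → M → M)
    (hstar : ∀ m m' : M, star m m' = l (rb m) m' + r m (rb m'))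
    (tri : M → A → A) (tra : A → M → A)
    (htri : ∀ (m : M) (a : A), tri m a = rb m * a - rb (r m a))
    (htra : ∀ (a : A) (m : M), tra a m = a * rb m - rb (l a m))
    (dia : M × A → M × A → M × A)
    (hdia : ∀ p q : M × A, dia p q = (star p.1 q.1, tri p.1 q.2 + tra p.2 q.1)) :
    (∀ u v w : M × A, dia (dia u v) w = dia u (dia v w)) ∧
    (∀ m m' m'' : M, star (star m m') m'' = star m (star m' m'')) := by
  have key : ∀ x y : M, rb (l (rb x) y + r x (rb y)) = rb x * rb y :=
    fun x y => (hrb x y).symm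
  have hstarassoc : ∀ m m' m'' : M, star (star m m') m'' = star m (star m' m'') := by
    intro m m' m''
    simp only [hstar, key, map_add, LinearMap.add_apply, hl, hr, hlr]
    abel
  refine ⟨?_, hstarassoc⟩
  rintro ⟨m, a⟩ ⟨m', a'⟩ ⟨m'', a''⟩
  simp only [hdia, hstar, htri, htra, key, Prod.mk.injEq]
  refine ⟨?_, ?_⟩
  · simp only [map_add, LinearMap.add_apply, hl, hr, hlr]
    abel
  · simp only [mul_add, add_mul, mul_sub, sub_mul, mul_assoc]
    simp only [hrb, map_add, map_sub, LinearMap.add_apply, LinearMap.sub_apply,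
      hl, hr, hlr, mul_add, mul_sub, add_mul, sub_mul, mul_assoc]
    abel
end

section
/- Let M be an A-bimodule, let H : A × A → M be a 2-cocycle, and let T : M → A be an H-twisted Rota-Baxter operator. Then the product on M defined by m⋆m' := T(m)·m' + m·T(m') + H(T(m), T(m')) is associative. -/
/-- Let `A` be a (possibly non-unital) associative `R`-algebra, `M` an
`A`-bimodule, `H : A × A → M` a 2-cocycle (i.e. the product
`(a,m) ∗_H (a',m') = (aa', a·m' + m·a' + H(a,a'))` on `A ⊕ M` is associative) and
`T : M → A` an `H`-twisted Rota-Baxter operator.  Then the product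
`m ⋆ m' := T(m)·m' + m·T(m') + H(T(m), T(m'))` on `M` is associative. -/
theorem twisted_rb_star_assoc {R A M : Type*} [CommRing R]
    [NonUnitalRing A] [Module R A] [SMulCommClass R A A] [IsScalarTower R A A]
    [AddCommGroup M] [Module R M]
    (l : A →ₗ[R] M →ₗ[R] M) (r : M →ₗ[R] A →ₗ[R] M)
    (hl : ∀ (a b : A) (m : M), l (a * b) m = l a (l b m))
    (hr : ∀ (m : M) (a b : A), r (r m a) b = r m (a * b))
    (hlr : ∀ (a : A) (m : M) (b : A), r (l a m) b = l a (r m b))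
    (H : A →ₗ[R] A →ₗ[R] M)
    (extH : A × M → A × M → A × M)
    (hextH : ∀ p q : A × M, extH p q = (p.1 * q.1, l p.1 q.2 + r p.2 q.1 + H p.1 q.1))
    (hcocycle : ∀ u v w : A × M, extH (extH u v) w = extH u (extH v w))
    (T : M →ₗ[R] A)
    (hT : ∀ m m' : M, T m * T m' = T (l (T m) m' + r m (T m') + H (T m) (T m')))
    (star : M → M → M)
    (hstar : ∀ m m' : M, star m m' = l (T m) m' + r m (T m') + H (T m) (T m')) :
    ∀ m m' m'' : M, star (star m m') m'' = star m (star m' m'') := by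
  have key : ∀ x y : M, extH (T x, x) (T y, y) = (T (star x y), star x y) := by
    intro x y
    rw [hextH]
    simp only
    rw [hstar, hT]
  intro m m' m''
  have h := hcocycle (T m, m) (T m', m') (T m'', m'')
  rw [key, key, key, key] at h
  exact congrArg Prod.snd h
end

section
/- Let M be an A-bimodule, let H : A × A → M be a 2-cocycle, and let T : M → A be an H-twisted Rota-Baxter operator. Define products on M by m≺m' := m·T(m'), m≻m' := T(m)·m', m∨m' := H(T(m), T(m')). Then (M, ≺, ≻, ∨) is an NS-algebra, i.e. relations (ns1)–(ns4) hold in M. -/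
/-- Let `A` be a (possibly non-unital) associative `R`-algebra, `M` an
`A`-bimodule, `H : A × A → M` a 2-cocycle and `T : M → A` an `H`-twisted Rota-Baxter
operator.  Then the products `m ≺ m' := m·T(m')`, `m ≻ m' := T(m)·m'`,
`m ∨ m' := H(T(m), T(m'))` make `M` into an NS-algebra, i.e. (ns1)–(ns4) hold. -/
theorem twisted_rb_ns {R A M : Type*} [CommRing R]
    [NonUnitalRing A] [Module R A] [SMulCommClass R A A] [IsScalarTower R A A]
    [AddCommGroup M] [Module R M]
    (l : A →ₗ[R] M →ₗ[R] M) (r : M →ₗ[R] A →ₗ[R] M)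
    (hl : ∀ (a b : A) (m : M), l (a * b) m = l a (l b m))
    (hr : ∀ (m : M) (a b : A), r (r m a) b = r m (a * b))
    (hlr : ∀ (a : A) (m : M) (b : A), r (l a m) b = l a (r m b))
    (H : A →ₗ[R] A →ₗ[R] M)
    (extH : A × M → A × M → A × M)
    (hextH : ∀ p q : A × M, extH p q = (p.1 * q.1, l p.1 q.2 + r p.2 q.1 + H p.1 q.1))
    (hcocycle : ∀ u v w : A × M, extH (extH u v) w = extH u (extH v w))
    (T : M →ₗ[R] A)
    (hT : ∀ m m' : M, T m * T m' = T (l (T m) m' + r m (T m') + H (T m) (T m')))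
    (pre suc vee star : M → M → M)
    (hpre : ∀ m m' : M, pre m m' = r m (T m'))
    (hsuc : ∀ m m' : M, suc m m' = l (T m) m')
    (hvee : ∀ m m' : M, vee m m' = H (T m) (T m'))
    (hstar : ∀ m m' : M, star m m' = pre m m' + suc m m' + vee m m') :
    (∀ a b c : M, pre (pre a b) c = pre a (star b c)) ∧
    (∀ a b c : M, pre (suc a b) c = suc a (pre b c)) ∧
    (∀ a b c : M, suc (star a b) c = suc a (suc b c)) ∧
    (∀ a b c : M,
      pre (vee a b) c + vee (star a b) c = suc a (vee b c) + vee a (star b c)) := by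
  -- T of the star product equals product of images
  have hTstar : ∀ m m' : M, T (star m m') = T m * T m' := by
    intro m m'
    rw [hstar, hpre, hsuc, hvee, hT]
    rw [show l (T m) m' + r m (T m') + H (T m) (T m')
        = r m (T m') + l (T m) m' + H (T m) (T m') by abel]
  -- the cocycle identity on H
  have hH : ∀ a b c : A,
      r (H a b) c + H (a * b) c = l a (H b c) + H a (b * c) := by
    intro a b c
    have := hcocycle (a, 0) (b, 0) (c, 0)
    rw [hextH (a,0) (b,0), hextH (b,0) (c,0)] at this
    simp only [hextH] at this
    simp only [map_zero, LinearMap.zero_apply, zero_add, add_zero] at this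
    have h2 := congrArg Prod.snd this
    simpa using h2
  refine ⟨?_, ?_, ?_, ?_⟩
  · intro a b c
    rw [hpre, hpre, hpre, hTstar, hr]
  · intro a b c
    rw [hpre, hsuc, hsuc, hpre, hlr]
  · intro a b c
    rw [hsuc, hsuc, hsuc, hTstar, hl]
  · intro a b c
    rw [hpre, hvee, hvee, hsuc, hvee, hvee, hTstar, hTstar]
    exact hH (T a) (T b) (T c)
end

section
/- Let (A, ≺, ≻, ∨) be an NS-algebra over R and set a⋆b := a≺b + a≻b + a∨b. Then the product on A ⊕ A defined by (a,x)∗_H(a',x') := (a⋆a', a≻x' + x≺a' + a∨a') is associative. In other words, (A,⋆) is an associative algebra, (A, ≻, ≺) is an (A,⋆)-bimodule, and H(a,a') := a∨a' is a 2-cocycle on (A,⋆) with values in this bimodule; moreover the identity map Id_A : (A,≻,≺) → (A,⋆) is an H-twisted Rota-Baxter operator. -/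
/-- Let `(A, ≺, ≻, ∨)` be an NS-algebra over `R` with
`a ⋆ b := a≺b + a≻b + a∨b`.  Then the product
`(a,x) ∗_H (a',x') := (a⋆a', a≻x' + x≺a' + a∨a')` on `A ⊕ A` is associative
(so `(A,⋆)` is associative, `(A,≻,≺)` is an `(A,⋆)`-bimodule, and `H(a,a') = a∨a'`
is a 2-cocycle); moreover `Id_A` is an `H`-twisted Rota-Baxter operator, i.e.
`a ⋆ a' = a≻a' + a≺a' + a∨a'`. -/
theorem ns_gives_twisted_rb {R A : Type*} [CommRing R] [AddCommGroup A] [Module R A]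
    (pre suc vee : A →ₗ[R] A →ₗ[R] A)
    (star : A → A → A)
    (hstar : ∀ a b : A, star a b = pre a b + suc a b + vee a b)
    (hns1 : ∀ a b c : A, pre (pre a b) c = pre a (star b c))
    (hns2 : ∀ a b c : A, pre (suc a b) c = suc a (pre b c))
    (hns3 : ∀ a b c : A, suc (star a b) c = suc a (suc b c))
    (hns4 : ∀ a b c : A,
      pre (vee a b) c + vee (star a b) c = suc a (vee b c) + vee a (star b c))
    (extH : A × A → A × A → A × A)
    (hextH : ∀ p q : A × A,
      extH p q = (star p.1 q.1, suc p.1 q.2 + pre p.2 q.1 + vee p.1 q.1)) :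
    (∀ u v w : A × A, extH (extH u v) w = extH u (extH v w)) ∧
    (∀ a a' : A, star a a' = suc a a' + pre a a' + vee a a') := by

  have expandL : ∀ x y z : A, pre (star x y) z
      = pre (pre x y) z + pre (suc x y) z + pre (vee x y) z := by
    intro x y z; rw [hstar]; simp [map_add]
  have expandS : ∀ x y z : A, suc x (star y z)
      = suc x (pre y z) + suc x (suc y z) + suc x (vee y z) := by
    intro x y z; rw [hstar]; simp [map_add]
  have expandP : ∀ x y z : A, pre x (star y z)
      = pre x (pre y z) + pre x (suc y z) + pre x (vee y z) := by
    intro x y z; rw [hstar]; simp [map_add]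
  constructor
  · rintro ⟨a, x⟩ ⟨b, y⟩ ⟨c, z⟩
    simp only [hextH]
    rw [Prod.mk.injEq]
    constructor
    · calc star (star a b) c
          = pre (pre a b) c + pre (suc a b) c + suc (star a b) c
            + (pre (vee a b) c + vee (star a b) c) := by
              rw [hstar (star a b) c, expandL a b c]; abel
        _ = pre a (star b c) + suc a (pre b c) + suc a (suc b c)
            + (suc a (vee b c) + vee a (star b c)) := by
              rw [hns1, hns2, hns3, hns4]
        _ = star a (star b c) := by
              rw [hstar a (star b c), expandS a b c]; abel
    · calc suc (star a b) z + pre (suc a y + pre x b + vee a b) c + vee (star a b) c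
          = suc (star a b) z + pre (suc a y) c + pre (pre x b) c
            + (pre (vee a b) c + vee (star a b) c) := by simp [map_add]; abel
        _ = suc a (suc b z) + suc a (pre y c) + pre x (star b c)
            + (suc a (vee b c) + vee a (star b c)) := by
              rw [hns1, hns2, hns3, hns4]
        _ = suc a (suc b z + pre y c + vee b c) + pre x (star b c) + vee a (star b c) := by
              simp [map_add]; abel
  · intro a a'
    rw [hstar]; abel
end

section
/- Let β : A → A be a Reynolds operator on a (possibly non-unital) associative R-algebra A, i.e. β(a)β(b) = β(β(a)b + aβ(b) − β(a)β(b)) for all a,b ∈ A. Define products on A by a≺b := aβ(b), a≻b := β(a)b, a∨b := −β(a)β(b). Then (A, ≺, ≻, ∨) is an NS-algebra, i.e. relations (ns1)–(ns4) hold. -/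
/-- Let `β` be a Reynolds operator on a (possibly non-unital)
associative `R`-algebra `A`, i.e. `β(a)β(b) = β(β(a)b + aβ(b) − β(a)β(b))`.
Then the products `a ≺ b := aβ(b)`, `a ≻ b := β(a)b`, `a ∨ b := −β(a)β(b)` make
`A` into an NS-algebra, i.e. (ns1)–(ns4) hold. -/
theorem reynolds_ns {R A : Type*} [CommRing R]
    [NonUnitalRing A] [Module R A] [SMulCommClass R A A] [IsScalarTower R A A]
    (β : A →ₗ[R] A)
    (hβ : ∀ a b : A, β a * β b = β (β a * b + a * β b - β a * β b))
    (pre suc vee star : A → A → A)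
    (hpre : ∀ a b : A, pre a b = a * β b)
    (hsuc : ∀ a b : A, suc a b = β a * b)
    (hvee : ∀ a b : A, vee a b = -(β a * β b))
    (hstar : ∀ a b : A, star a b = pre a b + suc a b + vee a b) :
    (∀ a b c : A, pre (pre a b) c = pre a (star b c)) ∧
    (∀ a b c : A, pre (suc a b) c = suc a (pre b c)) ∧
    (∀ a b c : A, suc (star a b) c = suc a (suc b c)) ∧
    (∀ a b c : A,
      pre (vee a b) c + vee (star a b) c = suc a (vee b c) + vee a (star b c)) := by
  have hβstar : ∀ a b : A, β (star a b) = β a * β b := by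
    intro a b
    rw [hstar, hpre, hsuc, hvee,
      show a * β b + β a * b + -(β a * β b) = β a * b + a * β b - β a * β b by abel,
      ← hβ]
  refine ⟨?_, ?_, ?_, ?_⟩
  · intro a b c
    rw [hpre, hpre, hpre, hβstar, mul_assoc]
  · intro a b c
    rw [hpre, hsuc, hsuc, hpre, mul_assoc]
  · intro a b c
    rw [hsuc, hsuc, hsuc, hβstar, mul_assoc]
  · intro a b c
    simp only [hpre, hvee, hsuc, hβstar]
    rw [neg_mul, mul_neg, mul_assoc]
end

section
/- Let N : A → A be a Nijenhuis operator on a (possibly non-unital) associative R-algebra A and set a⋆b := N(a)b + aN(b) − N(ab). Then the product on A ⊕ A defined by (a,x)†(b,y) := (a⋆b, N(a)y + xN(b) − N(ab)) is associative. Equivalently: (A,⋆) is an associative algebra, A with actions a·x := N(a)x and x·a := xN(a) is an (A,⋆)-bimodule, and H(a,b) := −N(ab) is a 2-cocycle on (A,⋆) with values in this bimodule. -/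
/-- Let `N` be a Nijenhuis operator on a (possibly non-unital)
associative `R`-algebra `A` and set `a ⋆ b := N(a)b + aN(b) − N(ab)`.  Then the
product `(a,x) † (b,y) := (a⋆b, N(a)y + xN(b) − N(ab))` on `A ⊕ A` is associative.
Equivalently: `(A,⋆)` is associative, `A` with the actions `a·x := N(a)x` and
`x·a := xN(a)` is an `(A,⋆)`-bimodule, and `H(a,b) := −N(ab)` is a 2-cocycle. -/
theorem nijenhuis_cocycle {R A : Type*} [CommRing R]
    [NonUnitalRing A] [Module R A] [SMulCommClass R A A] [IsScalarTower R A A]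
    (N : A →ₗ[R] A)
    (hN : ∀ a b : A, N a * N b = N (N a * b + a * N b - N (a * b)))
    (star : A → A → A)
    (hstar : ∀ a b : A, star a b = N a * b + a * N b - N (a * b))
    (dag : A × A → A × A → A × A)
    (hdag : ∀ p q : A × A,
      dag p q = (star p.1 q.1, N p.1 * q.2 + p.2 * N q.1 - N (p.1 * q.1))) :
    ∀ u v w : A × A, dag (dag u v) w = dag u (dag v w) := by
  have hNs : ∀ a b : A, N (star a b) = N a * N b := by
    intro a b; rw [hstar, ← hN]
  intro u v w
  obtain ⟨a, x⟩ := u; obtain ⟨b, y⟩ := v; obtain ⟨c, z⟩ := w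
  have key : ∀ a b c : A,
      N (a*b) * N c = N (N (a*b) * c) + N (a*b*N c) - N (N (a*b*c)) := by
    intro a b c
    rw [hN, map_sub, map_add, mul_assoc]
  have key2 : ∀ a b c : A,
      N a * N (b*c) = N (N a * (b*c)) + N (a*(N (b*c))) - N (N (a*(b*c))) := by
    intro a b c
    rw [hN, map_sub, map_add]
  simp only [hdag, Prod.mk.injEq]
  constructor
  · rw [hstar (star a b) c, hstar a (star b c), hNs, hNs]
    simp only [hstar, map_sub, map_add, sub_mul, add_mul, mul_sub, mul_add,
      key, key2, mul_assoc]
    abel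
  · simp only [hNs]
    simp only [hstar, map_sub, map_add, sub_mul, add_mul, mul_sub, mul_add,
      key, key2, mul_assoc]
    abel
end
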